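/- Let h : O → O' be a Borel measurable map such that (1) for every Borel set A' ⊆ O' with A' ⊆ h(O) and A' bounded away from C', the preimage h^{-1}(A') is bounded away from C, and (2) μ(D_h) = 0, where D_h ⊆ O is the set of points at which h is discontinuous. If μ_n → μ in M_O, then the pushforward measures μ_n ∘ h^{-1} and μ ∘ h^{-1} belong to M_{O'} and μ_n ∘ h^{-1} → μ ∘ h^{-1} in M_{O'}; equivalently, ∫ (f' ∘ h) dμ_n → ∫ (f' ∘ h) dμ for every f' ∈ C_{O'}. -/

import Mathlib

/-!
Multiplying by a continuous cutoff that vanishes near `C` and equals `1` away from it turns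
convergence in `M_O` into weak convergence of finite measures. By the hypothesis on `h`,
`f' ∘ h` (set to `0` on `C`) vanishes near `C`, and it is continuous off the `μ`-null set
`C ∪ D_h`. For finite measures, integrals of bounded functions that are continuous almost
everywhere for the limit still converge: by the layer cake formula they are integrals of the
measures of the superlevel sets, whose boundaries are null for all but countably many levels.
Changing variables transfers this convergence to the pushforwards.
-/

open MeasureTheory Metric Filter Topology Set

noncomputable section

variable {S : Type*} [MetricSpace S] [MeasurableSpace S]

/-- `A` is bounded away from `C`: `A ⊆ S \ C^r` for some `r > 0`. -/
def BddAway (C A : Set S) : Prop := ∃ r > 0, ∀ x ∈ A, r ≤ infDist x C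

/-- The class `C_O` of test functions: bounded, nonnegative, continuous on `O = S \ C`,
and vanishing on `C^r` for some `r > 0` (extended by `0` to all of `S`). -/
def IsCO (C : Set S) (f : S → ℝ) : Prop :=
  ContinuousOn f Cᶜ ∧ (∀ x, 0 ≤ f x) ∧ (∃ B : ℝ, ∀ x, f x ≤ B) ∧
    ∃ r > 0, ∀ x, infDist x C < r → f x = 0

/-- The class `M_O`: Borel measures on `O = S \ C` (i.e. giving no mass to `C`)
that are finite on `S \ C^r` for each `r > 0`. -/
def MemMO (C : Set S) (μ : Measure S) : Prop :=
  μ C = 0 ∧ ∀ r : ℝ, 0 < r → μ {x | r ≤ infDist x C} < ⊤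

/-- Convergence `μ_n → μ` in `M_O`. -/
def MOTendsto (C : Set S) (μn : ℕ → Measure S) (μ : Measure S) : Prop :=
  ∀ f : S → ℝ, IsCO C f →
    Tendsto (fun n => ∫ x, f x ∂ μn n) atTop (𝓝 (∫ x, f x ∂ μ))

open scoped ENNReal NNReal

section Portmanteau

variable {Ω : Type*} [MeasurableSpace Ω] [TopologicalSpace Ω] [OpensMeasurableSpace Ω]
  [HasOuterApproxClosed Ω]

theorem MeasureTheory.FiniteMeasure.tendsto_measure_of_null_frontier_of_tendsto
    {ι : Type*} {L : Filter ι} {μ : FiniteMeasure Ω} {μs : ι → FiniteMeasure Ω}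
    (hlim : Tendsto μs L (𝓝 μ)) {E : Set Ω} (hE : μ (frontier E) = 0) :
    Tendsto (fun i ↦ μs i E) L (𝓝 (μ E)) := by
  rcases isEmpty_or_nonempty Ω with hΩ | hΩ
  · simpa [eq_empty_of_isEmpty E, coeFn_def] using tendsto_const_nhds
  rcases eq_or_ne μ 0 with rfl | hμ
  · have hmass : Tendsto (fun i ↦ (μs i).mass) L (𝓝 0) := by simpa using hlim.mass
    simpa using tendsto_of_tendsto_of_tendsto_of_le_of_le tendsto_const_nhds hmass
      (fun i ↦ zero_le) (fun i ↦ (μs i).apply_le_mass E)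
  have hnormalize : Tendsto (fun i ↦ (μs i).normalize E) L (𝓝 (μ.normalize E)) :=
    ProbabilityMeasure.tendsto_measure_of_null_frontier_of_tendsto
      (tendsto_normalize_of_tendsto hlim hμ) (by rw [μ.normalize_eq_of_nonzero hμ, hE, mul_zero])
  simpa only [← self_eq_mass_mul_normalize] using hlim.mass.mul hnormalize

theorem frontier_setOf_lt_subset {X α : Type*} [TopologicalSpace X] [LinearOrder α]
    [TopologicalSpace α] [OrderClosedTopology α] (F : X → α) (t : α) :
    frontier {x | t < F x} ⊆ {x | ¬ContinuousAt F x} ∪ {x | F x = t} := by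
  intro x hx
  by_cases hF : ContinuousAt F x
  · rw [frontier_eq_closure_inter_closure, compl_ofPred] at hx
    refine Or.inr (le_antisymm ?_ ?_)
    · exact ContinuousWithinAt.closure_le hx.2 hF.continuousWithinAt continuousWithinAt_const
        fun y hy ↦ not_lt.mp hy
    · exact ContinuousWithinAt.closure_le hx.1 continuousWithinAt_const hF.continuousWithinAt
        fun y hy ↦ hy.le
  · exact Or.inl hF

theorem MeasureTheory.FiniteMeasure.tendsto_integral_of_tendsto_of_ae_continuousAt
    {μ : FiniteMeasure Ω} {μs : ℕ → FiniteMeasure Ω} (hlim : Tendsto μs atTop (𝓝 μ))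
    {F : Ω → ℝ} (hFm : Measurable F) (hF0 : 0 ≤ F) {B : ℝ} (hFB : ∀ x, F x ≤ B)
    (hF : (μ : Measure Ω) {x | ¬ContinuousAt F x} = 0) :
    Tendsto (fun n ↦ ∫ x, F x ∂(μs n : Measure Ω)) atTop (𝓝 (∫ x, F x ∂(μ : Measure Ω))) := by
  have hint (ν : FiniteMeasure Ω) : Integrable F ν :=
    (integrable_const B).mono' hFm.aestronglyMeasurable
      (.of_forall fun x ↦ (Real.norm_of_nonneg (hF0 x)).trans_le (hFB x))
  obtain ⟨M, hM⟩ : ∃ M, ∀ n, (μs n).mass ≤ M :=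
    hlim.mass.bddAbove_range.imp fun M hM n ↦ hM ⟨n, rfl⟩
  simp_rw [(hint _).integral_eq_integral_meas_lt (.of_forall hF0), measureReal_eq_coe_coeFn]
  refine tendsto_integral_of_dominated_convergence ((Ioc 0 B).indicator fun _ ↦ (M : ℝ))
    (fun n ↦ ?_) ?_ (fun n ↦ ?_) ?_
  · exact (Antitone.measurable (f := fun t : ℝ ↦ ((μs n {a | t < F a} : ℝ≥0) : ℝ))
      fun s t hst ↦ NNReal.coe_le_coe.mpr
      ((μs n).apply_mono fun a ha ↦ hst.trans_lt ha)).aestronglyMeasurable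
  · exact (integrableOn_const measure_Ioc_lt_top.ne).integrable_indicator measurableSet_Ioc
      |>.restrict
  · filter_upwards [ae_restrict_mem measurableSet_Ioi] with t ht
    rw [Real.norm_of_nonneg (NNReal.coe_nonneg _)]
    by_cases htB : t ≤ B
    · rw [indicator_of_mem (show t ∈ Ioc 0 B from ⟨ht, htB⟩)]
      exact_mod_cast ((μs n).apply_le_mass _).trans (hM n)
    · have hempty : {a | t < F a} = ∅ :=
        eq_empty_of_forall_notMem fun a ha ↦ htB (ha.le.trans (hFB a))
      simp [hempty, coeFn_def, indicator_nonneg]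
  · have hlevel : ∀ᵐ t ∂(volume.restrict (Ioi (0 : ℝ))), (μ : Measure Ω) {a | F a = t} = 0 := by
      refine ae_restrict_of_ae (measure_mono_null (fun t ht ↦ ?_)
        ((Measure.countable_meas_level_set_pos (μ := (μ : Measure Ω)) hFm).measure_zero volume))
      exact pos_iff_ne_zero.mpr ht
    filter_upwards [hlevel] with t ht
    refine NNReal.tendsto_coe.mpr (tendsto_measure_of_null_frontier_of_tendsto hlim ?_)
    exact (μ.null_iff_toMeasure_null _).mpr
      (measure_mono_null (frontier_setOf_lt_subset F t) (measure_union_null hF ht))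

end Portmanteau

section BoundedAway

variable {X : Type*} [MetricSpace X] {C : Set X}

theorem BddAway.subset_compl {A : Set X} (hA : BddAway C A) : A ⊆ Cᶜ := by
  obtain ⟨r, hr, hAr⟩ := hA
  intro x hxA hxC
  exact (hAr x hxA).not_gt (by rwa [infDist_zero_of_mem hxC])

theorem BddAway.mono {A B : Set X} (hAB : A ⊆ B) (hB : BddAway C B) : BddAway C A :=
  hB.imp fun _ ⟨hr, hBr⟩ ↦ ⟨hr, fun x hx ↦ hBr x (hAB hx)⟩

theorem bddAway_setOf_le_infDist {r : ℝ} (hr : 0 < r) : BddAway C {x | r ≤ infDist x C} :=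
  ⟨r, hr, fun _ hx ↦ hx⟩

/-- A sequence escaping towards `C` would have a countable, hence measurable, image to which
`hbdd` applies. -/
theorem bddAway_inter_preimage {Y : Type*} [MetricSpace Y] [MeasurableSpace Y]
    [MeasurableSingletonClass Y] {C' : Set Y} {h : X → Y}
    (hbdd : ∀ A' : Set Y, MeasurableSet A' → A' ⊆ C'ᶜ → A' ⊆ h '' Cᶜ →
        BddAway C' A' → BddAway C (Cᶜ ∩ h ⁻¹' A'))
    {A' : Set Y} (hA' : BddAway C' A') : BddAway C (Cᶜ ∩ h ⁻¹' A') := by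
  by_contra hcon
  have hseq (k : ℕ) : ∃ x ∈ Cᶜ ∩ h ⁻¹' A', infDist x C < 1 / ((k : ℝ) + 1) := by
    by_contra! hk
    exact hcon ⟨_, Nat.one_div_pos_of_nat, hk⟩
  choose xs hxs hxsC using hseq
  have hrange : BddAway C' (range (h ∘ xs)) := hA'.mono (range_subset_iff.mpr fun k ↦ (hxs k).2)
  obtain ⟨ρ, hρ, hρC⟩ := hbdd _ (countable_range _).measurableSet hrange.subset_compl
    (by rintro _ ⟨k, rfl⟩; exact ⟨xs k, (hxs k).1, rfl⟩) hrange
  obtain ⟨k, hk⟩ := exists_nat_one_div_lt hρ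
  exact (hρC (xs k) ⟨(hxs k).1, k, rfl⟩).not_gt ((hxsC k).trans hk)

theorem IsCO.continuous (hC : IsClosed C) {f : X → ℝ} (hf : IsCO C f) : Continuous f := by
  obtain ⟨hfC, -, -, r, hr, hf0⟩ := hf
  refine continuous_iff_continuousAt.mpr fun x ↦ ?_
  by_cases hx : x ∈ C
  · have hnear : {y | infDist y C < r} ∈ 𝓝 x :=
      (isOpen_lt (continuous_infDist_pt C) continuous_const).mem_nhds
        (by rwa [mem_ofPred_eq, infDist_zero_of_mem hx])
    exact continuousAt_const.congr (Filter.mem_of_superset hnear fun y hy ↦ (hf0 y hy).symm)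
  · exact (hfC x hx).continuousAt (hC.isOpen_compl.mem_nhds hx)

def cutoff (C : Set X) (ρ : ℝ) (x : X) : ℝ≥0 := (min 1 (2 * infDist x C / ρ - 1)).toNNReal

theorem continuous_cutoff (ρ : ℝ) : Continuous (cutoff C ρ) :=
  continuous_real_toNNReal.comp (continuous_const.min
    ((continuous_const.mul (continuous_infDist_pt C)).div_const ρ |>.sub continuous_const))

theorem cutoff_le_one (ρ : ℝ) (x : X) : cutoff C ρ x ≤ 1 :=
  Real.toNNReal_le_one.mpr (min_le_left _ _)

theorem cutoff_eq_zero {ρ : ℝ} (hρ : 0 < ρ) {x : X} (hx : 2 * infDist x C ≤ ρ) :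
    cutoff C ρ x = 0 :=
  Real.toNNReal_eq_zero.mpr ((min_le_right _ _).trans
    (sub_nonpos.mpr ((div_le_one hρ).mpr hx)))

theorem cutoff_eq_one {ρ : ℝ} (hρ : 0 < ρ) {x : X} (hx : ρ ≤ infDist x C) :
    cutoff C ρ x = 1 := by
  have : 1 ≤ 2 * infDist x C / ρ - 1 := by
    rw [le_sub_iff_add_le, le_div_iff₀ hρ]
    linarith
  simp [cutoff, min_eq_left this]

end BoundedAway

theorem measurableSet_setOf_le_infDist {X : Type*} [MetricSpace X] [MeasurableSpace X]
    [OpensMeasurableSpace X] (C : Set X) (r : ℝ) : MeasurableSet {x | r ≤ infDist x C} :=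
  measurableSet_le measurable_const (continuous_infDist_pt C).measurable

section MO

variable [OpensMeasurableSpace S] {C : Set S} {μ : Measure S} {μn : ℕ → Measure S}

theorem IsCO.integrable {f : S → ℝ} (hf : IsCO C f) (hfm : AEStronglyMeasurable f μ)
    (hμ : MemMO C μ) : Integrable f μ := by
  obtain ⟨-, hf0, ⟨B, hfB⟩, r, hr, hfC⟩ := hf
  refine ((integrableOn_const (hμ.2 r hr).ne).integrable_indicator
    (measurableSet_setOf_le_infDist C r)).mono' hfm (.of_forall fun x ↦ ?_)
  by_cases hx : r ≤ infDist x C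
  · simpa [indicator_of_mem (show x ∈ {x | r ≤ infDist x C} from hx), abs_of_nonneg (hf0 x)]
      using hfB x
  · simp [hfC x (not_le.mp hx), indicator_nonneg, (hf0 x).trans (hfB x)]

theorem MemMO.isFiniteMeasure_withDensity_cutoff (hμ : MemMO C μ) {ρ : ℝ} (hρ : 0 < ρ) :
    IsFiniteMeasure (μ.withDensity fun x ↦ cutoff C ρ x) := by
  refine ⟨?_⟩
  rw [withDensity_apply _ MeasurableSet.univ, setLIntegral_univ]
  calc ∫⁻ x, (cutoff C ρ x : ℝ≥0∞) ∂μ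
      ≤ ∫⁻ x, {x | ρ / 2 ≤ infDist x C}.indicator 1 x ∂μ := by
        refine lintegral_mono fun x ↦ ?_
        by_cases hx : ρ / 2 ≤ infDist x C
        · simpa [indicator_of_mem (show x ∈ {x | ρ / 2 ≤ infDist x C} from hx)]
            using cutoff_le_one ρ x
        · simp [cutoff_eq_zero hρ (by linarith : 2 * infDist x C ≤ ρ)]
    _ = μ {x | ρ / 2 ≤ infDist x C} := lintegral_indicator_one (measurableSet_setOf_le_infDist C _)
    _ < ⊤ := hμ.2 _ (half_pos hρ)

def MemMO.cutoffMeasure (hμ : MemMO C μ) {ρ : ℝ} (hρ : 0 < ρ) : FiniteMeasure S :=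
  ⟨μ.withDensity fun x ↦ cutoff C ρ x, hμ.isFiniteMeasure_withDensity_cutoff hρ⟩

theorem MOTendsto.tendsto_cutoffMeasure (hμ : MemMO C μ) (hμn : ∀ n, MemMO C (μn n))
    (hconv : MOTendsto C μn μ) {ρ : ℝ} (hρ : 0 < ρ) :
    Tendsto (fun n ↦ (hμn n).cutoffMeasure hρ) atTop (𝓝 (hμ.cutoffMeasure hρ)) := by
  refine FiniteMeasure.tendsto_iff_forall_lintegral_tendsto.mpr fun ψ ↦ ?_
  set g : S → ℝ := fun x ↦ (cutoff C ρ x * ψ x : ℝ≥0)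
  have hgc : Continuous g := ((continuous_cutoff ρ).mul ψ.continuous).subtype_val
  have hg : IsCO C g := by
    refine ⟨hgc.continuousOn, fun x ↦ (cutoff C ρ x * ψ x).2, ⟨nndist ψ 0, fun x ↦ ?_⟩,
      ρ / 2, half_pos hρ, fun x hx ↦ ?_⟩
    · calc g x ≤ ψ x := NNReal.coe_le_coe.mpr
            (mul_le_of_le_one_left (ψ x).2 (cutoff_le_one ρ x))
        _ ≤ nndist ψ 0 :=
          NNReal.coe_le_coe.mpr (BoundedContinuousFunction.NNReal.upper_bound ψ x)
    · simp [g, cutoff_eq_zero hρ (by linarith : 2 * infDist x C ≤ ρ)]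
  have hlint (m : Measure S) (hm : MemMO C m) :
      ∫⁻ x, ψ x ∂(m.withDensity fun x ↦ cutoff C ρ x) = ENNReal.ofReal (∫ x, g x ∂m) := by
    rw [lintegral_withDensity_eq_lintegral_mul _
      (continuous_cutoff ρ).measurable.coe_nnreal_ennreal
      ψ.continuous.measurable.coe_nnreal_ennreal, ofReal_integral_eq_lintegral_ofReal
      (hg.integrable hgc.aestronglyMeasurable hm) (.of_forall hg.2.1)]
    simp [g]
  simp only [MemMO.cutoffMeasure, FiniteMeasure.toMeasure_mk, hlint _ hμ, hlint _ (hμn _)]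
  exact ENNReal.tendsto_ofReal (hconv g hg)

theorem MOTendsto.tendsto_integral_of_ae_continuousAt (hμ : MemMO C μ)
    (hμn : ∀ n, MemMO C (μn n)) (hconv : MOTendsto C μn μ) {F : S → ℝ} (hFm : Measurable F)
    (hF0 : 0 ≤ F) {B : ℝ} (hFB : ∀ x, F x ≤ B) {ρ : ℝ} (hρ : 0 < ρ)
    (hFC : ∀ x, infDist x C < ρ → F x = 0) (hF : μ {x | ¬ContinuousAt F x} = 0) :
    Tendsto (fun n ↦ ∫ x, F x ∂μn n) atTop (𝓝 (∫ x, F x ∂μ)) := by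
  have hcut (m : Measure S) (hm : MemMO C m) :
      ∫ x, F x ∂(hm.cutoffMeasure hρ : Measure S) = ∫ x, F x ∂m := by
    rw [MemMO.cutoffMeasure, FiniteMeasure.toMeasure_mk,
      integral_withDensity_eq_integral_smul (continuous_cutoff ρ).measurable]
    refine integral_congr_ae (.of_forall fun x ↦ ?_)
    by_cases hx : infDist x C < ρ
    · simp [hFC x hx]
    · simp [cutoff_eq_one hρ (not_lt.mp hx)]
  simpa only [hcut _ hμ, hcut _ (hμn _)] using
    FiniteMeasure.tendsto_integral_of_tendsto_of_ae_continuousAt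
      (hconv.tendsto_cutoffMeasure hμ hμn hρ) hFm hF0 hFB
      (withDensity_absolutelyContinuous _ _ hF)

end MO

theorem aemeasurable_of_measurable_domRestrict {α β : Type*} [MeasurableSpace α]
    [MeasurableSpace β] {s : Set α} {f : α → β} {μ : Measure α} (hs : MeasurableSet s)
    (hf : Measurable (s.domRestrict f)) (hμ : ∀ᵐ x ∂μ, x ∈ s) : AEMeasurable f μ := by
  rw [← Measure.restrict_eq_self_of_ae_mem hμ]
  exact (aemeasurable_restrict_iff_comap_subtype hs).mpr hf.aemeasurable

theorem measurable_indicator_of_measurable_domRestrict {α β : Type*} [MeasurableSpace α]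
    [MeasurableSpace β] [Zero β] {s : Set α} {f : α → β} (hs : MeasurableSet s)
    (hf : Measurable (s.domRestrict f)) : Measurable (s.indicator f) := by
  refine measurable_of_restrict_of_restrict_compl hs ?_ ?_
  · convert hf using 1
    exact funext fun x ↦ indicator_of_mem x.2 f
  · convert measurable_const (a := (0 : β)) using 1
    exact funext fun x ↦ indicator_of_notMem x.2 f

theorem setOf_not_continuousAt_indicator_comp_subset {X Y Z : Type*} [TopologicalSpace X]
    [TopologicalSpace Y] [TopologicalSpace Z] [Zero Z] {U : Set X} (hU : IsOpen U) {g : Y → Z}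
    (hg : Continuous g) (h : X → Y) :
    {x | ¬ContinuousAt (U.indicator (g ∘ h)) x} ⊆ Uᶜ ∪ {x | x ∈ U ∧ ¬ContinuousWithinAt h U x} := by
  intro x hx
  by_cases hxU : x ∈ U
  · refine Or.inr ⟨hxU, fun hh ↦ hx ?_⟩
    exact ((hg.continuousAt.comp_continuousWithinAt hh).continuousAt (hU.mem_nhds hxU)).congr
      (eventuallyEq_of_mem (hU.mem_nhds hxU) fun y hy ↦ (indicator_of_mem hy _).symm)
  · exact Or.inl hxU

section Pushforward

variable {S' : Type*} [MetricSpace S'] [MeasurableSpace S'] [OpensMeasurableSpace S']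
  [MeasurableSingletonClass S']
  {C : Set S} {C' : Set S'} {h : S → S'} {μ : Measure S}

theorem MemMO.map (hC' : IsClosed C') (hμ : MemMO C μ)
    (hh : AEMeasurable h μ) (hmaps : MapsTo h Cᶜ C'ᶜ)
    (hbdd : ∀ A' : Set S', MeasurableSet A' → A' ⊆ C'ᶜ → A' ⊆ h '' Cᶜ →
        BddAway C' A' → BddAway C (Cᶜ ∩ h ⁻¹' A')) :
    MemMO C' (μ.map h) := by
  refine ⟨?_, fun r hr ↦ ?_⟩
  · rw [Measure.map_apply_of_aemeasurable hh hC'.measurableSet]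
    exact measure_mono_null (fun x hx ↦ by_contra fun hxC ↦ hmaps hxC hx) hμ.1
  · obtain ⟨ρ, hρ, hρC⟩ := bddAway_inter_preimage hbdd (bddAway_setOf_le_infDist (C := C') hr)
    rw [Measure.map_apply_of_aemeasurable hh (measurableSet_setOf_le_infDist C' r)]
    calc μ (h ⁻¹' {y | r ≤ infDist y C'}) ≤ μ (C ∪ {x | ρ ≤ infDist x C}) :=
          measure_mono fun x hx ↦ (em (x ∈ C)).imp id fun hxC ↦ hρC x ⟨hxC, hx⟩
      _ ≤ μ C + μ {x | ρ ≤ infDist x C} := measure_union_le _ _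
      _ < ⊤ := by rw [hμ.1, zero_add]; exact hμ.2 ρ hρ

theorem MOTendsto.tendsto_integral_comp [OpensMeasurableSpace S] (hC : IsClosed C)
    (hC' : IsClosed C') {μn : ℕ → Measure S} (hμ : MemMO C μ) (hμn : ∀ n, MemMO C (μn n))
    (hconv : MOTendsto C μn μ) (hmeas : Measurable (Cᶜ.domRestrict h))
    (hbdd : ∀ A' : Set S', MeasurableSet A' → A' ⊆ C'ᶜ → A' ⊆ h '' Cᶜ →
        BddAway C' A' → BddAway C (Cᶜ ∩ h ⁻¹' A'))
    (hdisc : μ {x | x ∈ Cᶜ ∧ ¬ContinuousWithinAt h Cᶜ x} = 0) {f' : S' → ℝ} (hf' : IsCO C' f') :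
    Tendsto (fun n ↦ ∫ x, f' (h x) ∂μn n) atTop (𝓝 (∫ x, f' (h x) ∂μ)) := by
  have hf'c := hf'.continuous hC'
  obtain ⟨-, hf'0, ⟨B, hf'B⟩, r, hr, hf'C'⟩ := hf'
  obtain ⟨ρ, hρ, hρC⟩ := bddAway_inter_preimage hbdd (bddAway_setOf_le_infDist (C := C') hr)
  set F := Cᶜ.indicator (f' ∘ h)
  have hF (m : Measure S) (hm : m C = 0) : ∫ x, f' (h x) ∂m = ∫ x, F x ∂m :=
    integral_congr_ae (by
      filter_upwards [compl_mem_ae_iff.mpr hm] with x hx using (indicator_of_mem hx (f' ∘ h)).symm)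
  have hFB (x : S) : F x ≤ B :=
    indicator_apply_le' (fun _ ↦ hf'B _) fun _ ↦ (hf'0 (h x)).trans (hf'B (h x))
  have hFC (x : S) (hx : infDist x C < ρ) : F x = 0 := by
    by_cases hxC : x ∈ C
    · exact indicator_of_notMem (not_not_intro hxC) (f' ∘ h)
    · exact (indicator_of_mem hxC _).trans
        (hf'C' _ (not_le.mp fun hr' ↦ hx.not_ge (hρC x ⟨hxC, hr'⟩)))
  have hFdisc : μ {x | ¬ContinuousAt F x} = 0 := by
    refine measure_mono_null (setOf_not_continuousAt_indicator_comp_subset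
      hC.isOpen_compl hf'c h) ?_
    rw [compl_compl]
    exact measure_union_null hμ.1 hdisc
  simpa only [hF _ hμ.1, hF _ (hμn _).1] using hconv.tendsto_integral_of_ae_continuousAt hμ hμn
    (measurable_indicator_of_measurable_domRestrict (f := f' ∘ h) hC.measurableSet.compl
      (hf'c.measurable.comp hmeas)) (indicator_nonneg fun x _ ↦ hf'0 _) hFB hρ hFC hFdisc

end Pushforward

theorem stmt5_general [BorelSpace S] {S' : Type*} [MetricSpace S'] [MeasurableSpace S'] [BorelSpace S']
    (C : Set S) (hC : IsClosed C) (C' : Set S') (hC' : IsClosed C')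
    (μ : Measure S) (μn : ℕ → Measure S)
    (hμ : MemMO C μ) (hμn : ∀ n, MemMO C (μn n))
    (h : S → S') (hmaps : Set.MapsTo h Cᶜ C'ᶜ)
    (hmeas : Measurable (Cᶜ.restrict h))
    (hbdd : ∀ A' : Set S', MeasurableSet A' → A' ⊆ C'ᶜ → A' ⊆ h '' Cᶜ →
        BddAway C' A' → BddAway C (Cᶜ ∩ h ⁻¹' A'))
    (hdisc : μ {x | x ∈ Cᶜ ∧ ¬ ContinuousWithinAt h Cᶜ x} = 0)
    (hconv : MOTendsto C μn μ) :
    MemMO C' (Measure.map h μ) ∧ (∀ n, MemMO C' (Measure.map h (μn n))) ∧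
    MOTendsto C' (fun n => Measure.map h (μn n)) (Measure.map h μ) ∧
    ∀ f' : S' → ℝ, IsCO C' f' →
      Tendsto (fun n => ∫ x, f' (h x) ∂ μn n) atTop (𝓝 (∫ x, f' (h x) ∂ μ)) := by
  have hh (m : Measure S) (hm : MemMO C m) : AEMeasurable h m :=
    aemeasurable_of_measurable_domRestrict hC.measurableSet.compl hmeas (compl_mem_ae_iff.mpr hm.1)
  have hcomp (f' : S' → ℝ) (hf' : IsCO C' f') :=
    hconv.tendsto_integral_comp hC hC' hμ hμn hmeas hbdd hdisc hf'
  have hmap (m : Measure S) (hm : MemMO C m) (f' : S' → ℝ) (hf' : IsCO C' f') :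
      ∫ y, f' y ∂(m.map h) = ∫ x, f' (h x) ∂m :=
    integral_map (hh m hm) (hf'.continuous hC').aestronglyMeasurable
  refine ⟨hμ.map hC' (hh μ hμ) hmaps hbdd, fun n ↦ (hμn n).map hC' (hh _ (hμn n)) hmaps hbdd,
    fun f' hf' ↦ ?_, hcomp⟩
  simpa only [hmap _ hμ f' hf', hmap _ (hμn _) f' hf'] using hcomp f' hf'

/-- Mapping theorem: if `h : O → O'` is Borel measurable, preimages of sets bounded
away from `C'` (contained in `h(O)`) are bounded away from `C`, and `μ` gives no mass
to the discontinuity set of `h`, then `μ_n → μ` in `M_O` implies that the pushforwards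
lie in `M_{O'}` and converge in `M_{O'}`. -/
theorem stmt5 [BorelSpace S] {S' : Type*} [MetricSpace S'] [MeasurableSpace S'] [BorelSpace S']
    [CompleteSpace S] [TopologicalSpace.SeparableSpace S]
    [CompleteSpace S'] [TopologicalSpace.SeparableSpace S']
    (C : Set S) (hC : IsClosed C) (C' : Set S') (hC' : IsClosed C')
    (μ : Measure S) (μn : ℕ → Measure S)
    (hμ : MemMO C μ) (hμn : ∀ n, MemMO C (μn n))
    (h : S → S') (hmaps : Set.MapsTo h Cᶜ C'ᶜ)
    (hmeas : Measurable (Cᶜ.restrict h))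
    (hbdd : ∀ A' : Set S', MeasurableSet A' → A' ⊆ C'ᶜ → A' ⊆ h '' Cᶜ →
        BddAway C' A' → BddAway C (Cᶜ ∩ h ⁻¹' A'))
    (hdisc : μ {x | x ∈ Cᶜ ∧ ¬ ContinuousWithinAt h Cᶜ x} = 0)
    (hconv : MOTendsto C μn μ) :
    MemMO C' (Measure.map h μ) ∧ (∀ n, MemMO C' (Measure.map h (μn n))) ∧
    MOTendsto C' (fun n => Measure.map h (μn n)) (Measure.map h μ) ∧
    ∀ f' : S' → ℝ, IsCO C' f' →
      Tendsto (fun n => ∫ x, f' (h x) ∂ μn n) atTop (𝓝 (∫ x, f' (h x) ∂ μ)) :=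
  stmt5_general C hC C' hC' μ μn hμ hμn h hmaps hmeas hbdd hdisc hconv
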